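/- Let (M,g₀) be a pseudo-Riemannian manifold of dimension n ≥ 3 with Ric(g₀) = 2λ(n−1)g₀ for a constant λ. Define the one-parameter family g(ρ) = (1+λρ)² g₀ for ρ with 1+λρ > 0. Then g(ρ) satisfies the ambient Ricci-flatness equations: (i) ρ g″_{ij} − ρ g^{kl}g′_{ik}g′_{jl} + (ρ/2) g^{kl}g′_{kl} g′_{ij} − (n/2 − 1) g′_{ij} − (1/2) g^{kl}g′_{kl} g_{ij} + R_{ij}[g(ρ)] = 0; (ii) g^{kl}(∇_k g′_{il} − ∇_i g′_{kl}) = 0; (iii) −(1/2)g^{kl}g″_{kl} + (1/4) g^{kl}g^{pq}g′_{kp}g′_{lq} = 0, where ′ = ∂_ρ, g^{kl} is the inverse of g(ρ), and R_{ij}[g(ρ)], ∇ are the Ricci curvature and Levi-Civita connection of g(ρ) at fixed ρ. -/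

import Mathlib

open Finset

/-- The partial derivative `∂_k f` at `x`. -/
noncomputable def pd {n : ℕ} (k : Fin n) (f : (Fin n → ℝ) → ℝ) (x : Fin n → ℝ) : ℝ :=
  fderiv ℝ f x (Pi.single k 1)

/-- The Christoffel symbols `Γ^l_{ij}` of a metric `g` in coordinates:
`Γ^l_{ij} = (1/2) g^{lm} (∂_i g_{mj} + ∂_j g_{mi} − ∂_m g_{ij})`. -/
noncomputable def christoffel {n : ℕ} (g : (Fin n → ℝ) → Matrix (Fin n) (Fin n) ℝ)
    (l i j : Fin n) (x : Fin n → ℝ) : ℝ :=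
  (1/2) * ∑ m, (g x)⁻¹ l m *
    (pd i (fun y => g y m j) x + pd j (fun y => g y m i) x - pd m (fun y => g y i j) x)

/-- The Ricci curvature `R_{ij}` of a metric `g` in coordinates:
`R_{ij} = ∂_l Γ^l_{ij} − ∂_i Γ^l_{lj} + Γ^l_{lm}Γ^m_{ij} − Γ^l_{im}Γ^m_{lj}`. -/
noncomputable def ricci {n : ℕ} (g : (Fin n → ℝ) → Matrix (Fin n) (Fin n) ℝ)
    (i j : Fin n) (x : Fin n → ℝ) : ℝ :=
  (∑ l, pd l (fun y => christoffel g l i j y) x)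
    - (∑ l, pd i (fun y => christoffel g l l j y) x)
    + (∑ l, ∑ m, christoffel g l l m x * christoffel g m i j x)
    - (∑ l, ∑ m, christoffel g l i m x * christoffel g m l j x)

/-- The covariant derivative `∇_k T_{ij}` of a 2-tensor field `T` with respect to
the Levi-Civita connection of `g`:
`∇_k T_{ij} = ∂_k T_{ij} − Γ^m_{ki} T_{mj} − Γ^m_{kj} T_{im}`. -/
noncomputable def covDeriv2 {n : ℕ} (g T : (Fin n → ℝ) → Matrix (Fin n) (Fin n) ℝ)
    (k i j : Fin n) (x : Fin n → ℝ) : ℝ :=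
  pd k (fun y => T y i j) x - (∑ m, christoffel g m k i x * T x m j)
    - (∑ m, christoffel g m k j x * T x i m)

/- ======================= auxiliary lemmas ======================= -/

lemma pd_const_mul {n : ℕ} (k : Fin n) (c : ℝ) (f : (Fin n → ℝ) → ℝ) (x : Fin n → ℝ)
    (hf : DifferentiableAt ℝ f x) :
    pd k (fun y => c * f y) x = c * pd k f x := by
  unfold pd
  rw [fderiv_const_mul hf]
  simp

lemma sum_pair {n : ℕ} (e : Matrix (Fin n) (Fin n) ℝ) (hs : e.IsSymm) (hd : IsUnit e.det)
    (i j : Fin n) : ∑ k, ∑ l, e⁻¹ k l * e i k * e j l = e i j := by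
  have hA : ∀ k, ∑ l, e⁻¹ k l * e i k * e j l = e i k * (e⁻¹ * e) k j := by
    intro k
    rw [Matrix.mul_apply, Finset.mul_sum]
    refine Finset.sum_congr rfl fun l _ => ?_
    rw [hs.apply l j]
    ring
  calc ∑ k, ∑ l, e⁻¹ k l * e i k * e j l = ∑ k, e i k * (e⁻¹ * e) k j :=
        Finset.sum_congr rfl fun k _ => hA k
    _ = ∑ k, e i k * (1 : Matrix (Fin n) (Fin n) ℝ) k j := by rw [Matrix.nonsing_inv_mul e hd]
    _ = e i j := by simp [Matrix.one_apply]

lemma sum_trace {n : ℕ} (e : Matrix (Fin n) (Fin n) ℝ) (hs : e.IsSymm) (hd : IsUnit e.det) :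
    ∑ k, ∑ l, e⁻¹ k l * e k l = (n : ℝ) := by
  have hA : ∀ k, ∑ l, e⁻¹ k l * e k l = (e⁻¹ * e) k k := by
    intro k
    rw [Matrix.mul_apply]
    exact Finset.sum_congr rfl fun l _ => by rw [hs.apply l k]
  calc ∑ k, ∑ l, e⁻¹ k l * e k l = ∑ k, (e⁻¹ * e) k k := Finset.sum_congr rfl fun k _ => hA k
    _ = (n : ℝ) := by rw [Matrix.nonsing_inv_mul e hd]; simp [Matrix.one_apply]

lemma sum_quad {n : ℕ} (e : Matrix (Fin n) (Fin n) ℝ) (hs : e.IsSymm) (hd : IsUnit e.det) :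
    ∑ k, ∑ l, ∑ p, ∑ q, e⁻¹ k l * e⁻¹ p q * e k p * e l q = (n : ℝ) := by
  have h1 : ∀ k l : Fin n, ∑ p, ∑ q, e⁻¹ k l * e⁻¹ p q * e k p * e l q
      = e⁻¹ k l * ∑ p, ∑ q, e⁻¹ p q * e k p * e l q := by
    intro k l
    rw [Finset.mul_sum]
    refine Finset.sum_congr rfl fun p _ => ?_
    rw [Finset.mul_sum]
    exact Finset.sum_congr rfl fun q _ => by ring
  calc ∑ k, ∑ l, ∑ p, ∑ q, e⁻¹ k l * e⁻¹ p q * e k p * e l q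
      = ∑ k, ∑ l, e⁻¹ k l * e k l := by
        refine Finset.sum_congr rfl fun k _ => Finset.sum_congr rfl fun l _ => ?_
        rw [h1 k l, sum_pair e hs hd k l]
    _ = (n : ℝ) := sum_trace e hs hd

/-- Metric compatibility: the covariant derivative of `g` w.r.t. its own
Levi-Civita connection vanishes. -/
lemma metricity {n : ℕ} (g : (Fin n → ℝ) → Matrix (Fin n) (Fin n) ℝ)
    (hsymm : ∀ y, (g y).IsSymm) (hnondeg : ∀ y, IsUnit (g y).det)
    (k i j : Fin n) (x : Fin n → ℝ) : covDeriv2 g g k i j x = 0 := by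
  have hge : ∀ a b : Fin n, (fun y => g y a b) = (fun y => g y b a) :=
    fun a b => funext fun y => (hsymm y).apply b a
  have key : ∀ (F : Fin n → ℝ) (c : Fin n),
      ∑ m, ((1/2 : ℝ) * ∑ r, (g x)⁻¹ m r * F r) * g x m c = (1/2) * F c := by
    intro F c
    have step1 : ∀ m, ((1/2 : ℝ) * ∑ r, (g x)⁻¹ m r * F r) * g x m c
        = ∑ r, (1/2 : ℝ) * ((g x)⁻¹ m r * F r * g x m c) := by
      intro m
      rw [mul_assoc, Finset.sum_mul, Finset.mul_sum]
    rw [Finset.sum_congr rfl fun m _ => step1 m, Finset.sum_comm]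
    have step2 : ∀ r, ∑ m, (1/2 : ℝ) * ((g x)⁻¹ m r * F r * g x m c)
        = (1/2) * ((g x * (g x)⁻¹) c r * F r) := by
      intro r
      calc ∑ m, (1/2 : ℝ) * ((g x)⁻¹ m r * F r * g x m c)
          = ∑ m, (1/2) * F r * (g x c m * (g x)⁻¹ m r) := by
            refine Finset.sum_congr rfl fun m _ => ?_
            rw [(hsymm x).apply c m]; ring
        _ = (1/2) * F r * ∑ m, g x c m * (g x)⁻¹ m r := by rw [Finset.mul_sum]
        _ = (1/2) * ((g x * (g x)⁻¹) c r * F r) := by rw [Matrix.mul_apply]; ring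
    rw [Finset.sum_congr rfl fun r _ => step2 r, Matrix.mul_nonsing_inv _ (hnondeg x)]
    simp [Matrix.one_apply]
  have hmain : ∀ a b c : Fin n, ∑ m, christoffel g m a b x * g x m c =
      (1/2) * (pd a (fun y => g y c b) x + pd b (fun y => g y c a) x
        - pd c (fun y => g y a b) x) := by
    intro a b c
    unfold christoffel
    exact key (fun r => pd a (fun y => g y r b) x + pd b (fun y => g y r a) x
      - pd r (fun y => g y a b) x) c
  unfold covDeriv2
  have h2 : ∑ m, christoffel g m k j x * g x i m = ∑ m, christoffel g m k j x * g x m i :=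
    Finset.sum_congr rfl fun m _ => by rw [(hsymm x).apply m i]
  rw [h2, hmain k i j, hmain k j i, hge j i, hge j k, hge i k]
  ring

/-- Christoffel symbols are invariant under constant rescaling of the metric. -/
lemma christoffel_scale {n : ℕ} (c : ℝ) (hc : c ≠ 0)
    (g₀ gR : (Fin n → ℝ) → Matrix (Fin n) (Fin n) ℝ)
    (hgR : gR = fun y => Matrix.of fun i j => c^2 * g₀ y i j)
    (hdiff : ∀ i j, Differentiable ℝ fun y => g₀ y i j)
    (hnondeg : ∀ y, IsUnit (g₀ y).det)
    (l i j : Fin n) (y : Fin n → ℝ) :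
    christoffel gR l i j y = christoffel g₀ l i j y := by
  subst hgR
  have hinv : (Matrix.of fun i j => c^2 * g₀ y i j : Matrix (Fin n) (Fin n) ℝ)⁻¹
      = (c^2)⁻¹ • (g₀ y)⁻¹ := by
    apply Matrix.inv_eq_right_inv
    have h1 : (Matrix.of fun i j => c^2 * g₀ y i j : Matrix (Fin n) (Fin n) ℝ)
        = c^2 • g₀ y := by
      ext a b; simp [Matrix.smul_apply]
    rw [h1, Matrix.smul_mul, Matrix.mul_smul, smul_smul,
      mul_inv_cancel₀ (pow_ne_zero 2 hc), one_smul,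
      Matrix.mul_nonsing_inv _ (hnondeg y)]
  have hpd : ∀ (a m b : Fin n), pd a (fun z => c^2 * g₀ z m b) y
      = c^2 * pd a (fun z => g₀ z m b) y :=
    fun a m b => pd_const_mul a (c^2) _ y ((hdiff m b) y)
  unfold christoffel
  rw [hinv]
  simp only [Matrix.of_apply, Matrix.smul_apply, smul_eq_mul, hpd]
  rw [Finset.mul_sum, Finset.mul_sum]
  refine Finset.sum_congr rfl fun m _ => ?_
  field_simp

/-- Ricci curvature is invariant under constant rescaling of the metric. -/
lemma ricci_scale {n : ℕ} (c : ℝ) (hc : c ≠ 0)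
    (g₀ gR : (Fin n → ℝ) → Matrix (Fin n) (Fin n) ℝ)
    (hgR : gR = fun y => Matrix.of fun i j => c^2 * g₀ y i j)
    (hdiff : ∀ i j, Differentiable ℝ fun y => g₀ y i j)
    (hnondeg : ∀ y, IsUnit (g₀ y).det)
    (i j : Fin n) (x : Fin n → ℝ) :
    ricci gR i j x = ricci g₀ i j x := by
  have hch : ∀ (l a b : Fin n) (y : Fin n → ℝ),
      christoffel gR l a b y = christoffel g₀ l a b y :=
    fun l a b y => christoffel_scale c hc g₀ gR hgR hdiff hnondeg l a b y
  unfold ricci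
  simp only [hch]

lemma hasDeriv1 (lam K s : ℝ) :
    HasDerivAt (fun t => (1+lam*t)^2 * K) (2*lam*(1+lam*s)*K) s := by
  have hb : HasDerivAt (fun t : ℝ => 1+lam*t) lam s := by
    simpa using ((hasDerivAt_id s).const_mul lam).const_add 1
  have h := (hb.pow 2).mul_const K
  have h2 : (2:ℝ)*lam*(1+lam*s)*K = ((2:ℕ):ℝ) * (1+lam*s)^(2-1) * lam * K := by
    push_cast
    ring
  rw [h2]
  exact h

lemma deriv1 (lam K ρ : ℝ) : deriv (fun t => (1+lam*t)^2*K) ρ = 2*lam*(1+lam*ρ)*K :=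
  (hasDeriv1 lam K ρ).deriv

lemma deriv2 (lam K ρ : ℝ) : deriv (deriv (fun t => (1+lam*t)^2*K)) ρ = 2*lam^2*K := by
  have h : deriv (fun t => (1+lam*t)^2*K) = fun s => 2*lam*(1+lam*s)*K :=
    funext fun s => deriv1 lam K s
  rw [h]
  have hb : HasDerivAt (fun t : ℝ => 1+lam*t) lam ρ := by
    simpa using ((hasDerivAt_id ρ).const_mul lam).const_add 1
  have h2 := (hb.const_mul (2*lam)).mul_const K
  rw [h2.deriv]
  ring

/-- If `Ric(g₀) = 2λ(n−1)g₀` (`n ≥ 3`), then the family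
`g(ρ) = (1+λρ)² g₀` (for `1+λρ > 0`) satisfies the ambient Ricci-flatness
equations (i) `R̃_{ij} = 0`, (ii) `R̃_{i∞} = 0`, (iii) `R̃_{∞∞} = 0`, where
`′ = ∂_ρ`, indices are raised with the inverse of `g(ρ)`, and Ricci curvature and
covariant derivatives are those of `g(ρ)` at fixed `ρ`. -/
theorem einstein_family_solves_ambient_equations
    (n : ℕ) (hn : 3 ≤ n) (lam : ℝ)
    (g₀ : (Fin n → ℝ) → Matrix (Fin n) (Fin n) ℝ)
    (hsmooth : ∀ i j : Fin n, ContDiff ℝ (⊤ : ℕ∞) (fun x => g₀ x i j))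
    (hsymm : ∀ x, (g₀ x).IsSymm)
    (hnondeg : ∀ x, IsUnit (g₀ x).det)
    (heinstein : ∀ x, ∀ i j : Fin n, ricci g₀ i j x = 2 * lam * ((n : ℝ) - 1) * g₀ x i j)
    (ρ : ℝ) (hρ : 0 < 1 + lam * ρ) (x : Fin n → ℝ) :
    let gR : (Fin n → ℝ) → Matrix (Fin n) (Fin n) ℝ :=
      fun y => Matrix.of fun i j => (1 + lam * ρ)^2 * g₀ y i j
    let gp : (Fin n → ℝ) → Matrix (Fin n) (Fin n) ℝ :=
      fun y => Matrix.of fun i j => deriv (fun s => (1 + lam * s)^2 * g₀ y i j) ρ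
    let gpp : (Fin n → ℝ) → Matrix (Fin n) (Fin n) ℝ :=
      fun y => Matrix.of fun i j => deriv (deriv (fun s => (1 + lam * s)^2 * g₀ y i j)) ρ
    let ginv : Matrix (Fin n) (Fin n) ℝ := (gR x)⁻¹
    -- (i)  ρg″_{ij} − ρg^{kl}g′_{ik}g′_{jl} + (ρ/2)g^{kl}g′_{kl}g′_{ij}
    --        − (n/2−1)g′_{ij} − (1/2)g^{kl}g′_{kl}g_{ij} + R_{ij}[g(ρ)] = 0
    (∀ i j : Fin n,
      ρ * gpp x i j - ρ * (∑ k, ∑ l, ginv k l * gp x i k * gp x j l)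
        + (ρ/2) * (∑ k, ∑ l, ginv k l * gp x k l) * gp x i j
        - ((n : ℝ)/2 - 1) * gp x i j
        - (1/2) * (∑ k, ∑ l, ginv k l * gp x k l) * gR x i j
        + ricci gR i j x = 0) ∧
    -- (ii)  g^{kl}(∇_k g′_{il} − ∇_i g′_{kl}) = 0
    (∀ i : Fin n,
      ∑ k, ∑ l, ginv k l * (covDeriv2 gR gp k i l x - covDeriv2 gR gp i k l x) = 0) ∧
    -- (iii)  −(1/2)g^{kl}g″_{kl} + (1/4)g^{kl}g^{pq}g′_{kp}g′_{lq} = 0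
    (-(1/2) * (∑ k, ∑ l, ginv k l * gpp x k l)
      + (1/4) * (∑ k, ∑ l, ∑ p, ∑ q, ginv k l * ginv p q * gp x k p * gp x l q) = 0) := by
  intro gR gp gpp ginv
  have hc : (1 + lam * ρ) ≠ 0 := ne_of_gt hρ
  have hdiff : ∀ i j, Differentiable ℝ fun y => g₀ y i j :=
    fun i j => (hsmooth i j).differentiable (by simp)
  have hgRdef : gR = fun y => Matrix.of fun i j => (1 + lam * ρ)^2 * g₀ y i j := rfl
  have hgp : ∀ (y : Fin n → ℝ) (i j : Fin n),
      gp y i j = 2*lam*(1 + lam*ρ) * g₀ y i j := by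
    intro y i j
    show deriv (fun s => (1 + lam * s)^2 * g₀ y i j) ρ = _
    rw [deriv1]
  have hgpp : ∀ (y : Fin n → ℝ) (i j : Fin n), gpp y i j = 2*lam^2 * g₀ y i j := by
    intro y i j
    show deriv (deriv (fun s => (1 + lam * s)^2 * g₀ y i j)) ρ = _
    rw [deriv2]
  have hgRx : ∀ (i j : Fin n), gR x i j = (1 + lam*ρ)^2 * g₀ x i j := fun i j => rfl
  have hinv : ginv = ((1 + lam*ρ)^2)⁻¹ • (g₀ x)⁻¹ := by
    show (gR x)⁻¹ = _
    apply Matrix.inv_eq_right_inv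
    have h1 : gR x = (1 + lam*ρ)^2 • g₀ x := by
      ext a b; rw [hgRx]; simp
    rw [h1, Matrix.smul_mul, Matrix.mul_smul, smul_smul,
      mul_inv_cancel₀ (pow_ne_zero 2 hc), one_smul,
      Matrix.mul_nonsing_inv _ (hnondeg x)]
  have hS1 : ∀ i j : Fin n, ∑ k, ∑ l, (g₀ x)⁻¹ k l * g₀ x i k * g₀ x j l = g₀ x i j :=
    sum_pair (g₀ x) (hsymm x) (hnondeg x)
  have hS2 : ∑ k, ∑ l, (g₀ x)⁻¹ k l * g₀ x k l = (n : ℝ) :=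
    sum_trace (g₀ x) (hsymm x) (hnondeg x)
  have hS3 : ∑ k, ∑ l, ∑ p, ∑ q, (g₀ x)⁻¹ k l * (g₀ x)⁻¹ p q * g₀ x k p * g₀ x l q = (n : ℝ) :=
    sum_quad (g₀ x) (hsymm x) (hnondeg x)
  have hTr : ∑ k, ∑ l, ginv k l * gp x k l = 2*lam*(1 + lam*ρ)⁻¹ * (n : ℝ) := by
    have h : ∀ k l : Fin n, ginv k l * gp x k l
        = 2*lam*(1 + lam*ρ)⁻¹ * ((g₀ x)⁻¹ k l * g₀ x k l) := by
      intro k l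
      rw [hinv, hgp]
      simp only [Matrix.smul_apply, smul_eq_mul]
      field_simp
    simp only [h, ← Finset.mul_sum]
    rw [hS2]
  refine ⟨?_, ?_, ?_⟩
  · intro i j
    have hric : ricci gR i j x = 2*lam*((n:ℝ)-1) * g₀ x i j := by
      rw [ricci_scale (1 + lam*ρ) hc g₀ gR hgRdef hdiff hnondeg i j x, heinstein]
    have h2 : ∑ k, ∑ l, ginv k l * gp x i k * gp x j l = 4*lam^2 * g₀ x i j := by
      have h : ∀ k l : Fin n, ginv k l * gp x i k * gp x j l
          = 4*lam^2 * ((g₀ x)⁻¹ k l * g₀ x i k * g₀ x j l) := by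
        intro k l
        rw [hinv, hgp, hgp]
        simp only [Matrix.smul_apply, smul_eq_mul]
        field_simp
        ring
      simp only [h, ← Finset.mul_sum]
      rw [hS1 i j]
    rw [hgpp, hgp, hgRx, h2, hTr, hric]
    field_simp
    linear_combination (2*lam^2*g₀ x i j*ρ*(n:ℝ)) * mul_inv_cancel₀ hc
  · intro i
    have hcov : ∀ a b c : Fin n, covDeriv2 gR gp a b c x = 0 := by
      intro a b c
      have hch : ∀ (l u v : Fin n), christoffel gR l u v x = christoffel g₀ l u v x :=
        fun l u v => christoffel_scale (1 + lam*ρ) hc g₀ gR hgRdef hdiff hnondeg l u v x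
      unfold covDeriv2
      have hpdgp : pd a (fun y => gp y b c) x
          = 2*lam*(1 + lam*ρ) * pd a (fun y => g₀ y b c) x := by
        have hfe : (fun y => gp y b c) = fun y => 2*lam*(1 + lam*ρ) * g₀ y b c :=
          funext fun y => hgp y b c
        rw [hfe]
        exact pd_const_mul a _ _ x ((hdiff b c) x)
      rw [hpdgp]
      simp only [hch, hgp]
      have h1 : ∑ m, christoffel g₀ m a b x * (2*lam*(1 + lam*ρ) * g₀ x m c)
          = 2*lam*(1 + lam*ρ) * ∑ m, christoffel g₀ m a b x * g₀ x m c := by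
        rw [Finset.mul_sum]; exact Finset.sum_congr rfl fun m _ => by ring
      have h1' : ∑ m, christoffel g₀ m a c x * (2*lam*(1 + lam*ρ) * g₀ x b m)
          = 2*lam*(1 + lam*ρ) * ∑ m, christoffel g₀ m a c x * g₀ x b m := by
        rw [Finset.mul_sum]; exact Finset.sum_congr rfl fun m _ => by ring
      rw [h1, h1']
      have hm := metricity g₀ hsymm hnondeg a b c x
      unfold covDeriv2 at hm
      linear_combination 2*lam*(1 + lam*ρ) * hm
    simp [hcov]
  · have h1 : ∑ k, ∑ l, ginv k l * gpp x k l = 2*lam^2*((1 + lam*ρ)^2)⁻¹ * (n : ℝ) := by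
      have h : ∀ k l : Fin n, ginv k l * gpp x k l
          = 2*lam^2*((1 + lam*ρ)^2)⁻¹ * ((g₀ x)⁻¹ k l * g₀ x k l) := by
        intro k l
        rw [hinv, hgpp]
        simp only [Matrix.smul_apply, smul_eq_mul]
        ring
      simp only [h, ← Finset.mul_sum]
      rw [hS2]
    have h2 : ∑ k, ∑ l, ∑ p, ∑ q, ginv k l * ginv p q * gp x k p * gp x l q
        = 4*lam^2*((1 + lam*ρ)^2)⁻¹ * (n : ℝ) := by
      have h : ∀ k l p q : Fin n, ginv k l * ginv p q * gp x k p * gp x l q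
          = 4*lam^2*((1 + lam*ρ)^2)⁻¹
            * ((g₀ x)⁻¹ k l * (g₀ x)⁻¹ p q * g₀ x k p * g₀ x l q) := by
        intro k l p q
        rw [hinv, hgp, hgp]
        simp only [Matrix.smul_apply, smul_eq_mul]
        field_simp
        ring
      simp only [h, ← Finset.mul_sum]
      rw [hS3]
    rw [h1, h2]
    ring
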